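/- arXiv:1909.10230 — 2 statements merged into one kernel-verified Lean document; each statement's English description precedes it below -/
import Mathlib

section
/- Let d ≥ 2 and let q > 2 be a real number. Let f, g ∈ L²(𝕊^{d−1}) with f not almost everywhere zero. If ∫_{ℝ^d} |\widehat{fσ}(z)|^{q−2} |\widehat{gσ}(z)|² dz = 0, then g = 0 almost everywhere on 𝕊^{d−1}. (In particular, for 2(d+1)/(d−1) ≤ q < ∞ the quadratic form g ↦ ∫_{ℝ^d} |\widehat{fσ}|^{q−2} |\widehat{gσ}|² dz associated to the operator T_f is positive definite.) -/
open MeasureTheory Metric Real Complex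

noncomputable section

/-- The unit sphere `𝕊^{d-1} ⊂ ℝ^d`. -/
abbrev Sph (d : ℕ) := Metric.sphere (0 : EuclideanSpace ℝ (Fin d)) 1

/-- The (unnormalized) surface measure `σ_{d-1}` on the unit sphere,
with total mass `ω_{d-1} = 2 π^(d/2) / Γ(d/2)`. -/
def sphMeasure (d : ℕ) : Measure (Sph d) :=
  (volume : Measure (EuclideanSpace ℝ (Fin d))).toSphere

/-- The extension operator `\widehat{fσ}(x) = ∫_{𝕊^{d-1}} f(ω) e^{-i x·ω} dσ_{d-1}(ω)`. -/
def extOp (d : ℕ) (f : Sph d → ℂ) (x : EuclideanSpace ℝ (Fin d)) : ℂ :=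
  ∫ ω, f ω * Complex.exp (-(Complex.I * ((inner ℝ x (ω : EuclideanSpace ℝ (Fin d)) : ℝ) : ℂ)))
    ∂(sphMeasure d)

/-- The Tomas–Stein functional `Φ_{d,q}(f) = ‖\widehat{fσ}‖_{L^q(ℝ^d)}^q / ‖f‖_{L²(𝕊^{d-1})}^q`. -/
def PhiTS (d : ℕ) (q : ℝ) (f : Sph d → ℂ) : ℝ :=
  (∫ x, ‖extOp d f x‖ ^ q ∂(volume : Measure (EuclideanSpace ℝ (Fin d)))) /
    (∫ ω, ‖f ω‖ ^ (2 : ℝ) ∂(sphMeasure d)) ^ (q / 2)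

/-- `f` is a maximizer of `Φ_{d,q}`: a nonzero element of `L²(𝕊^{d-1})` at which the
supremum of `Φ_{d,q}` over nonzero `L²` functions is attained. -/
def IsMaximizer (d : ℕ) (q : ℝ) (f : Sph d → ℂ) : Prop :=
  MemLp f 2 (sphMeasure d) ∧ ¬ f =ᵐ[sphMeasure d] 0 ∧
    ∀ g : Sph d → ℂ, MemLp g 2 (sphMeasure d) → ¬ g =ᵐ[sphMeasure d] 0 →
      PhiTS d q g ≤ PhiTS d q f

end

/-! The vanishing of the integral makes `\widehat{fσ} · \widehat{gσ}` vanish almost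
everywhere, hence everywhere since both transforms are continuous. Plane waves separate the points
of the sphere, so by Stone–Weierstrass they span a dense subspace of `C(𝕊^{d-1})`, which is dense
in `L²`; hence `u ↦ \widehat{uσ}` is injective on `L²`. Thus `\widehat{fσ} ≠ 0` on some ball, on
which `\widehat{gσ}` vanishes. On every line `\widehat{gσ}` is the restriction of an entire
function, so by the identity theorem `\widehat{gσ} ≡ 0`, and injectivity gives `g = 0`. -/

open Filter Topology Submodule Set
open scoped ComplexConjugate

theorem differentiable_integral_mul_cexp_mul {α : Type*} [MeasurableSpace α] {μ : Measure α}
    {h c : α → ℂ} (hh : Integrable h μ) (hc : AEStronglyMeasurable c μ) {C : ℝ}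
    (hC : ∀ ω, ‖c ω‖ ≤ C) : Differentiable ℂ fun z => ∫ ω, h ω * cexp (z * c ω) ∂μ := by
  have hexp_le {z : ℂ} {R : ℝ} (hz : ‖z‖ ≤ R) (ω : α) : ‖cexp (z * c ω)‖ ≤ Real.exp (R * C) := by
    refine (norm_exp_le_exp_norm _).trans (Real.exp_le_exp.mpr ?_)
    rw [norm_mul]
    exact mul_le_mul hz (hC ω) (norm_nonneg _) ((norm_nonneg z).trans hz)
  have hexp_meas (z : ℂ) : AEStronglyMeasurable (fun ω => cexp (z * c ω)) μ :=
    continuous_exp.comp_aestronglyMeasurable (hc.const_mul z)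
  intro z₀
  refine (hasDerivAt_integral_of_dominated_loc_of_deriv_le (ball_mem_nhds z₀ one_pos)
    (F' := fun z ω => h ω * (c ω * cexp (z * c ω)))
    (bound := fun ω => ‖h ω‖ * (C * Real.exp ((‖z₀‖ + 1) * C)))
    (.of_forall fun z => hh.1.mul (hexp_meas z))
    (hh.mul_bdd (hexp_meas z₀) (.of_forall (hexp_le le_rfl)))
    (hh.1.mul (hc.mul (hexp_meas z₀))) ?_ (hh.norm.mul_const _) ?_).2.differentiableAt
  · refine .of_forall fun ω z hz => ?_
    have hz' : ‖z‖ ≤ ‖z₀‖ + 1 := by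
      have := norm_le_norm_add_norm_sub' z z₀
      rw [mem_ball, dist_eq_norm] at hz
      linarith
    rw [norm_mul, norm_mul]
    gcongr
    · exact (norm_nonneg _).trans (hC ω)
    · exact hC ω
    · exact hexp_le hz' ω
  · refine .of_forall fun ω z _ => ?_
    simpa [mul_comm (c ω)] using
      (((hasDerivAt_id z).mul_const (c ω)).cexp).const_mul (h ω)

theorem mul_eq_zero_of_lintegral_rpow_mul_sq_eq_zero {X : Type*} [TopologicalSpace X]
    [MeasurableSpace X] [OpensMeasurableSpace X] {μ : Measure X} [μ.IsOpenPosMeasure]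
    {F G : X → ℂ} (hF : Continuous F) (hG : Continuous G) (p : ℝ)
    (h : ∫⁻ z, ENNReal.ofReal (‖F z‖ ^ p * ‖G z‖ ^ (2 : ℕ)) ∂μ = 0) : F * G = 0 := by
  have hmeas : AEMeasurable (fun z => ENNReal.ofReal (‖F z‖ ^ p * ‖G z‖ ^ (2 : ℕ))) μ :=
    (ENNReal.measurable_ofReal.comp
      ((hF.norm.measurable.pow_const p).mul (hG.norm.measurable.pow_const 2))).aemeasurable
  refine ((hF.mul hG).ae_eq_iff_eq μ continuous_const).mp ?_
  filter_upwards [(lintegral_eq_zero_iff' hmeas).mp h] with z hz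
  have hprod : ‖F z‖ ^ p * ‖G z‖ ^ (2 : ℕ) = 0 :=
    le_antisymm (ENNReal.ofReal_eq_zero.mp hz) (by positivity)
  change F z * G z = 0
  rcases mul_eq_zero.mp hprod with hFz | hGz
  · rw [norm_eq_zero.mp ((Real.rpow_eq_zero_iff_of_nonneg (norm_nonneg _)).mp hFz).1, zero_mul]
  · rw [norm_eq_zero.mp (pow_eq_zero_iff two_ne_zero |>.mp hGz), mul_zero]

section PlaneWave

variable {E : Type*} [NormedAddCommGroup E] [InnerProductSpace ℝ E] (K : Set E)

noncomputable def planeWave (ξ : E) : C(K, ℂ) :=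
  ⟨fun ω => cexp (-(I * ((inner ℝ ξ (ω : E) : ℝ) : ℂ))), by fun_prop⟩

variable {K}

@[simp]
theorem planeWave_apply (ξ : E) (ω : K) :
    planeWave K ξ ω = cexp (-(I * ((inner ℝ ξ (ω : E) : ℝ) : ℂ))) := rfl

theorem norm_planeWave_apply (ξ : E) (ω : K) : ‖planeWave K ξ ω‖ = 1 := by
  rw [planeWave_apply, Complex.norm_exp]
  simp

theorem planeWave_zero : planeWave K 0 = 1 := by
  ext ω; simp

theorem planeWave_add (ξ η : E) : planeWave K (ξ + η) = planeWave K ξ * planeWave K η := by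
  ext ω
  simp only [planeWave_apply, ContinuousMap.mul_apply, ← Complex.exp_add, inner_add_left]
  push_cast
  ring_nf

theorem star_planeWave (ξ : E) : star (planeWave K ξ) = planeWave K (-ξ) := by
  ext ω
  simp only [ContinuousMap.star_apply, planeWave_apply, RCLike.star_def, ← Complex.exp_conj,
    inner_neg_left, map_neg, map_mul, conj_I, conj_ofReal]
  push_cast
  ring_nf

theorem planeWave_add_smul_apply (ξ v : E) (t : ℝ) (ω : K) :
    planeWave K (ξ + t • v) ω =
      planeWave K ξ ω * cexp (t * -(I * ((inner ℝ v (ω : E) : ℝ) : ℂ))) := by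
  simp only [planeWave_apply, ← Complex.exp_add, inner_add_left, real_inner_smul_left]
  push_cast
  ring_nf

variable (K) in
noncomputable def planeWaveSubalgebra : StarSubalgebra ℂ C(K, ℂ) where
  toSubalgebra := Algebra.adjoin ℂ (range (planeWave K))
  star_mem' := by
    change Algebra.adjoin ℂ (range (planeWave K)) ≤ star (Algebra.adjoin ℂ (range (planeWave K)))
    refine Algebra.adjoin_le ?_
    rintro - ⟨ξ, rfl⟩
    exact Algebra.subset_adjoin ⟨-ξ, (star_planeWave ξ).symm⟩

theorem planeWaveSubalgebra_coe :
    Subalgebra.toSubmodule (planeWaveSubalgebra K).toSubalgebra = span ℂ (range (planeWave K)) := by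
  apply Algebra.adjoin_eq_span_of_subset
  refine Subset.trans ?_ subset_span
  intro φ hφ
  refine Submonoid.closure_induction (fun _ => id) ⟨0, planeWave_zero⟩ ?_ hφ
  rintro - - - - ⟨ξ, rfl⟩ ⟨η, rfl⟩
  exact ⟨ξ + η, planeWave_add ξ η⟩

/-- Two distinct points `ω₁ ≠ ω₂` are separated by the plane wave with frequency
`π (ω₁ - ω₂) / ‖ω₁ - ω₂‖²`, whose phases at `ω₁` and `ω₂` differ by `π`. -/
theorem planeWaveSubalgebra_separatesPoints : (planeWaveSubalgebra K).SeparatesPoints := by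
  intro ω₁ ω₂ hne
  set v : E := (ω₁ : E) - ω₂
  have hv : v ≠ 0 := sub_ne_zero.mpr (Subtype.coe_injective.ne hne)
  set ξ : E := (π / ‖v‖ ^ 2) • v
  refine ⟨_, ⟨planeWave K ξ, Algebra.subset_adjoin ⟨ξ, rfl⟩, rfl⟩, ?_⟩
  have hphase : inner ℝ ξ (ω₁ : E) = inner ℝ ξ (ω₂ : E) + π := by
    have : inner ℝ ξ v = π := by
      rw [real_inner_smul_left, real_inner_self_eq_norm_sq]
      field_simp [norm_ne_zero_iff.mpr hv]
    rw [← this, inner_sub_right]; ring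
  have hflip : planeWave K ξ ω₁ = -planeWave K ξ ω₂ := by
    rw [planeWave_apply, planeWave_apply, hphase, ofReal_add, mul_add, neg_add, Complex.exp_add,
      mul_comm I (π : ℂ), Complex.exp_neg (π * I), exp_pi_mul_I]
    ring
  change planeWave K ξ ω₁ ≠ planeWave K ξ ω₂
  rw [hflip]
  intro heq
  exact Complex.exp_ne_zero _ (by linear_combination -heq / 2 : planeWave K ξ ω₂ = 0)

theorem span_planeWave_closure_eq_top [CompactSpace K] :
    (span ℂ (range (planeWave K))).topologicalClosure = ⊤ := by
  rw [← planeWaveSubalgebra_coe]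
  exact congr_arg (Subalgebra.toSubmodule <| StarSubalgebra.toSubalgebra ·)
    (ContinuousMap.starSubalgebra_topologicalClosure_eq_top_of_separatesPoints _
      planeWaveSubalgebra_separatesPoints)

variable [MeasurableSpace E] [BorelSpace E] {μ : Measure K}

theorem continuous_integral_mul_planeWave {h : K → ℂ} (hh : Integrable h μ) :
    Continuous fun ξ => ∫ ω, h ω * planeWave K ξ ω ∂μ :=
  continuous_of_dominated (fun ξ => hh.1.mul (planeWave K ξ).continuous.aestronglyMeasurable)
    (fun ξ => .of_forall fun ω => by rw [norm_mul, norm_planeWave_apply, mul_one]) hh.norm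
    (.of_forall fun ω => by simp only [planeWave_apply]; fun_prop)

/-- Along the line `x₀ + t (y - x₀)` the transform is the restriction to real `t` of an entire
function of `t`, so vanishing near `x₀` propagates to `y` by the identity theorem. -/
theorem integral_mul_planeWave_eq_zero_of_eventuallyEq_zero [CompactSpace K] {h : K → ℂ}
    (hh : Integrable h μ) {x₀ : E}
    (hx₀ : (fun ξ => ∫ ω, h ω * planeWave K ξ ω ∂μ) =ᶠ[𝓝 x₀] 0) (y : E) :
    ∫ ω, h ω * planeWave K y ω ∂μ = 0 := by
  set v := y - x₀
  let c : C(K, ℂ) := ⟨fun ω => -(I * ((inner ℝ v (ω : E) : ℝ) : ℂ)), by fun_prop⟩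
  set F : ℂ → ℂ := fun z => ∫ ω, (h ω * planeWave K x₀ ω) * cexp (z * c ω) ∂μ
  have hF (t : ℝ) : F t = ∫ ω, h ω * planeWave K (x₀ + t • v) ω ∂μ := by
    simp only [F, planeWave_add_smul_apply, mul_assoc]
    rfl
  have hF_an : AnalyticOnNhd ℂ F univ := analyticOnNhd_univ_iff_differentiable.mpr <|
    differentiable_integral_mul_cexp_mul
      (hh.mul_bdd (planeWave K x₀).continuous.aestronglyMeasurable
        (.of_forall fun ω => (norm_planeWave_apply x₀ ω).le))
      c.continuous.aestronglyMeasurable c.norm_coe_le_norm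
  have hF_real : ∀ᶠ t : ℝ in 𝓝 0, F t = 0 := by
    have hline : Tendsto (fun t : ℝ => x₀ + t • v) (𝓝 0) (𝓝 x₀) := by
      have : Continuous fun t : ℝ => x₀ + t • v := by fun_prop
      simpa using this.tendsto 0
    filter_upwards [hline.eventually hx₀] with t ht
    rw [hF]
    exact ht
  have hofReal : Tendsto ((↑) : ℝ → ℂ) (𝓝[≠] 0) (𝓝[≠] 0) :=
    tendsto_nhdsWithin_of_tendsto_nhds_of_eventually_within _
      (continuous_ofReal.tendsto' 0 0 ofReal_zero |>.mono_left nhdsWithin_le_nhds)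
      (eventually_nhdsWithin_of_forall fun t ht => ofReal_ne_zero.mpr ht)
  have hF_freq : ∃ᶠ z in 𝓝[≠] (0 : ℂ), F z = 0 :=
    hofReal.frequently (hF_real.filter_mono nhdsWithin_le_nhds).frequently
  have h1 := hF_an.eqOn_zero_of_preconnected_of_frequently_eq_zero isPreconnected_univ
    (mem_univ 0) hF_freq (mem_univ 1)
  rwa [← ofReal_one, hF, one_smul, add_sub_cancel] at h1

theorem ae_eq_zero_of_forall_integral_mul_planeWave_eq_zero [CompactSpace K] [IsFiniteMeasure μ]
    [μ.WeaklyRegular] {h : K → ℂ} (hh : MemLp h 2 μ)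
    (hz : ∀ ξ, ∫ ω, h ω * planeWave K ξ ω ∂μ = 0) : h =ᵐ[μ] 0 := by
  set H : Lp ℂ 2 μ := hh.toLp h
  have hinner (φ : C(K, ℂ)) :
      inner ℂ (ContinuousMap.toLp 2 μ ℂ φ) H = ∫ ω, h ω * conj (φ ω) ∂μ := by
    rw [L2.inner_def]
    refine integral_congr_ae ?_
    filter_upwards [ContinuousMap.coeFn_toLp (p := 2) (𝕜 := ℂ) μ φ, hh.coeFn_toLp] with ω hφ hH
    rw [hφ, hH, RCLike.inner_apply]
  have horth : (innerSL ℂ H).comp (ContinuousMap.toLp 2 μ ℂ) = 0 := by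
    refine ContinuousLinearMap.ext_on
      (dense_iff_topologicalClosure_eq_top.mpr span_planeWave_closure_eq_top) ?_
    rintro - ⟨ξ, rfl⟩
    have hconj : ∀ ω, conj (planeWave K ξ ω) = planeWave K (-ξ) ω := fun ω =>
      congr($(star_planeWave ξ) ω)
    simp only [ContinuousLinearMap.comp_apply, innerSL_apply_apply, zero_apply]
    rw [← inner_conj_symm, hinner]
    simp_rw [hconj, hz, map_zero]
  have hH : H = 0 :=
    (ContinuousMap.toLp_denseRange (p := 2) ℂ μ ℂ (by norm_num)).eq_zero_of_inner_left ℂ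
      fun φ => congr($horth φ)
  filter_upwards [hh.coeFn_toLp, show (H : K → ℂ) =ᵐ[μ] 0 by rw [hH]; exact Lp.coeFn_zero ..]
    with ω h1 h2
  rw [← h1, h2]

end PlaneWave

section Sphere

variable {d : ℕ}

instance : IsFiniteMeasure (sphMeasure d) :=
  inferInstanceAs (IsFiniteMeasure (volume : Measure (EuclideanSpace ℝ (Fin d))).toSphere)

instance : (sphMeasure d).WeaklyRegular :=
  inferInstanceAs ((volume : Measure (EuclideanSpace ℝ (Fin d))).toSphere).WeaklyRegular

theorem continuous_extOp {u : Sph d → ℂ} (hu : Integrable u (sphMeasure d)) :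
    Continuous (extOp d u) :=
  continuous_integral_mul_planeWave hu

theorem ae_eq_zero_of_extOp_eq_zero {u : Sph d → ℂ} (hu : MemLp u 2 (sphMeasure d))
    (h : extOp d u = 0) : u =ᵐ[sphMeasure d] 0 :=
  ae_eq_zero_of_forall_integral_mul_planeWave_eq_zero hu (congrFun h)

theorem extOp_eq_zero_of_eventuallyEq_zero {u : Sph d → ℂ} (hu : Integrable u (sphMeasure d))
    {x₀ : EuclideanSpace ℝ (Fin d)} (h : extOp d u =ᶠ[𝓝 x₀] 0) : extOp d u = 0 :=
  funext (integral_mul_planeWave_eq_zero_of_eventuallyEq_zero hu h)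

end Sphere

theorem quadratic_form_positive_definite_general (d : ℕ) (q : ℝ)
    (f g : Sph d → ℂ) (hf2 : MemLp f 2 (sphMeasure d)) (hg2 : MemLp g 2 (sphMeasure d))
    (hf0 : ¬ f =ᵐ[sphMeasure d] 0)
    (h : ∫⁻ z, ENNReal.ofReal (‖extOp d f z‖ ^ (q - 2) * ‖extOp d g z‖ ^ (2 : ℕ))
        ∂(volume : Measure (EuclideanSpace ℝ (Fin d))) = 0) :
    g =ᵐ[sphMeasure d] 0 := by
  have hf_cont := continuous_extOp (hf2.integrable one_le_two)
  have hfg : extOp d f * extOp d g = 0 :=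
    mul_eq_zero_of_lintegral_rpow_mul_sq_eq_zero hf_cont
      (continuous_extOp (hg2.integrable one_le_two)) (q - 2) h
  obtain ⟨x₀, hx₀⟩ : ∃ x₀, extOp d f x₀ ≠ 0 := by
    by_contra! hzero
    exact hf0 (ae_eq_zero_of_extOp_eq_zero hf2 (funext hzero))
  have hg_near : extOp d g =ᶠ[𝓝 x₀] 0 :=
    (hf_cont.continuousAt.eventually_ne hx₀).mono fun x hx =>
      (mul_eq_zero.mp (congrFun hfg x)).resolve_left hx
  exact ae_eq_zero_of_extOp_eq_zero hg2
    (extOp_eq_zero_of_eventuallyEq_zero (hg2.integrable one_le_two) hg_near)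

/-- If `f ∈ L²(𝕊^{d-1})` is nonzero and
`∫_{ℝ^d} |\widehat{fσ}|^{q-2} |\widehat{gσ}|² dz = 0` for some `g ∈ L²(𝕊^{d-1})`,
then `g = 0` a.e.: the quadratic form associated to `T_f` is positive definite. -/
theorem quadratic_form_positive_definite (d : ℕ) (hd : 2 ≤ d) (q : ℝ) (hq : 2 < q)
    (f g : Sph d → ℂ) (hf2 : MemLp f 2 (sphMeasure d)) (hg2 : MemLp g 2 (sphMeasure d))
    (hf0 : ¬ f =ᵐ[sphMeasure d] 0)
    (h : ∫⁻ z, ENNReal.ofReal (‖extOp d f z‖ ^ (q - 2) * ‖extOp d g z‖ ^ (2 : ℕ))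
        ∂(volume : Measure (EuclideanSpace ℝ (Fin d))) = 0) :
    g =ᵐ[sphMeasure d] 0 :=
  quadratic_form_positive_definite_general d q f g hf2 hg2 hf0 h
end

section
/- Let α, β be real numbers with α > β − 1 > 0. Then the following two-sided estimate holds: (1/2) · 6^{(α−β+1)/2} · Γ((α−β+1)/2) Γ(α+1) / Γ((α−β+1)/2 + α + 1) ≤ ∫_0^∞ |sin r|^α r^{−β} dr ≤ (1/2) · (6/α)^{(α−β+1)/2} · Γ((α−β+1)/2) · Σ_{k=1}^∞ k^{−β}, where the series Σ_{k=1}^∞ k^{−β} converges since β > 1. -/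
/-!
Lower bound: `sin r ≥ r (1 - r² / 6)` for `r ≥ 0`, and on `(0, √6)` the right-hand side is
nonnegative; the integral of `(r (1 - r² / 6)) ^ α / r ^ β` over `(0, √6)` becomes a Beta
integral under `t = r² / 6`.

Upper bound: Euler's product `sin (π x) = π x ∏ (1 - x² / n²)` and `∑ 1 / n² = π² / 6` give
`sin s ≤ s exp (-s² / 6)` on `[0, π]`. Writing `r = s + k π` with `s ∈ (0, π]`, we have
`|sin r| = sin s` and `r ≥ (k + 1) s`, so the `k`-th period contributes at most
`(k + 1) ^ (-β) ∫₀^∞ s ^ (α - β) exp (-α s² / 6) ds`, a Gamma integral.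
-/

open Real MeasureTheory Set Filter Topology

lemma prod_one_sub_le_exp_neg_sum {ι : Type*} (s : Finset ι) {f : ι → ℝ}
    (hf : ∀ i ∈ s, f i ≤ 1) : ∏ i ∈ s, (1 - f i) ≤ exp (-∑ i ∈ s, f i) := by
  rw [← Finset.sum_neg_distrib, exp_sum]
  exact Finset.prod_le_prod (fun i hi => sub_nonneg.2 (hf i hi)) fun i _ => one_sub_le_exp_neg _

theorem sin_le_mul_exp_neg_sq_div_six {s : ℝ} (h0 : 0 ≤ s) (hπ : s ≤ π) :
    sin s ≤ s * exp (-(s ^ 2 / 6)) := by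
  set x := s / π
  have hs : π * x = s := mul_div_cancel₀ s pi_ne_zero
  have hx1 : x ^ 2 ≤ 1 := pow_le_one₀ (div_nonneg h0 pi_pos.le) (div_le_one_of_le₀ hπ pi_pos.le)
  have hsum : Tendsto (fun n : ℕ => ∑ j ∈ Finset.range n, x ^ 2 / ((j : ℝ) + 1) ^ 2) atTop
      (𝓝 (s ^ 2 / 6)) := by
    have := ((hasSum_nat_add_iff' 1).mpr (hasSum_zeta_two.mul_left (x ^ 2))).tendsto_sum_nat
    convert this using 2 with n
    · simp [div_eq_mul_inv]
    · rw [← hs, Finset.sum_range_one, Nat.cast_zero, zero_pow two_ne_zero, div_zero, mul_zero,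
        sub_zero]
      ring
  have hprod (n : ℕ) : π * x * ∏ j ∈ Finset.range n, (1 - x ^ 2 / ((j : ℝ) + 1) ^ 2) ≤
      π * x * exp (-∑ j ∈ Finset.range n, x ^ 2 / ((j : ℝ) + 1) ^ 2) := by
    refine mul_le_mul_of_nonneg_left (prod_one_sub_le_exp_neg_sum _ fun j _ => ?_) (hs ▸ h0)
    exact div_le_one_of_le₀ (hx1.trans (one_le_pow₀ (by simp))) (by positivity)
  have := le_of_tendsto_of_tendsto' (tendsto_euler_sin_prod x)
    (((continuous_exp.tendsto _).comp hsum.neg).const_mul _) hprod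
  rwa [hs] at this

theorem integral_Ioo_rpow_mul_one_sub_rpow {a b : ℝ} (ha : 0 < a) (hb : 0 < b) :
    ∫ t in Ioo (0 : ℝ) 1, t ^ (a - 1) * (1 - t) ^ (b - 1) = Gamma a * Gamma b / Gamma (a + b) := by
  rw [← ProbabilityTheory.beta, ProbabilityTheory.beta_eq_betaIntegralReal a b ha hb,
    Complex.betaIntegral, intervalIntegral.integral_of_le zero_le_one,
    ← integral_Ioc_eq_integral_Ioo, ← RCLike.re_to_complex, ← integral_re]
  · refine setIntegral_congr_fun measurableSet_Ioc fun t ht => ?_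
    norm_cast
    rw [← Complex.ofReal_cpow ht.1.le, ← Complex.ofReal_cpow (sub_nonneg.2 ht.2),
      ← Complex.ofReal_mul, RCLike.re_to_complex, Complex.ofReal_re]
  · have := Complex.betaIntegral_convergent (u := a) (v := b) (by simpa) (by simpa)
    rwa [intervalIntegrable_iff_integrableOn_Ioc_of_le zero_le_one] at this

/-- The right-hand side is the Beta integrand at `t = r² / a` times the Jacobian `|2 r / a|`. -/
lemma rpow_mul_one_sub_sq_div_rpow_eq {a p q r : ℝ} (ha : 0 < a) (hr : 0 < r) :
    r ^ p * (1 - r ^ 2 / a) ^ q = 1 / 2 * a ^ ((p + 1) / 2) *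
      (|2 * r / a| * ((r ^ 2 / a) ^ ((p + 1) / 2 - 1) * (1 - r ^ 2 / a) ^ (q + 1 - 1))) := by
  have hr2 : (r ^ 2) ^ ((p + 1) / 2 - 1) = r ^ p / r := by
    rw [← rpow_natCast, ← rpow_mul hr.le, ← rpow_sub_one hr.ne']
    congr 1
    push_cast
    ring
  rw [div_rpow (sq_nonneg r) ha.le, hr2, rpow_sub_one ha.ne', abs_of_pos (by positivity),
    add_sub_cancel_right]
  field_simp

theorem integral_Ioo_rpow_mul_one_sub_sq_div_rpow {a p q : ℝ} (ha : 0 < a) (hp : -1 < p)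
    (hq : -1 < q) :
    ∫ r in Ioo 0 √a, r ^ p * (1 - r ^ 2 / a) ^ q =
      1 / 2 * a ^ ((p + 1) / 2) *
        (Gamma ((p + 1) / 2) * Gamma (q + 1) / Gamma ((p + 1) / 2 + q + 1)) := by
  have hmono : StrictMonoOn (fun r : ℝ => r ^ 2 / a) (Icc 0 √a) := fun x hx y _ hxy =>
    div_lt_div_of_pos_right (pow_lt_pow_left₀ hxy hx.1 two_ne_zero) ha
  have himage : (fun r : ℝ => r ^ 2 / a) '' Ioo 0 √a = Ioo 0 1 := by
    rw [ContinuousOn.image_Ioo_of_strictMonoOn (sqrt_nonneg a) (by fun_prop) hmono,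
      sq_sqrt ha.le]
    simp [ha.ne']
  have hderiv (r : ℝ) (_ : r ∈ Ioo 0 √a) :
      HasDerivWithinAt (fun r : ℝ => r ^ 2 / a) (2 * r / a) (Ioo 0 √a) r := by
    simpa using ((hasDerivAt_pow 2 r).div_const a).hasDerivWithinAt
  have hcov := integral_image_eq_integral_abs_deriv_smul measurableSet_Ioo hderiv
    (hmono.injOn.mono Ioo_subset_Icc_self) (fun t => t ^ ((p + 1) / 2 - 1) * (1 - t) ^ (q + 1 - 1))
  rw [himage, integral_Ioo_rpow_mul_one_sub_rpow (by linarith) (by linarith)] at hcov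
  simp only [smul_eq_mul] at hcov
  rw [setIntegral_congr_fun measurableSet_Ioo fun r hr => rpow_mul_one_sub_sq_div_rpow_eq ha hr.1,
    integral_const_mul, ← hcov, add_assoc]

lemma integral_rpow_mul_exp_neg_mul_sq {b q : ℝ} (hb : 0 < b) (hq : -1 < q) :
    ∫ x in Ioi 0, x ^ q * exp (-b * x ^ 2) = 1 / 2 * b⁻¹ ^ ((q + 1) / 2) * Gamma ((q + 1) / 2) := by
  simp_rw [← rpow_two]
  rw [integral_rpow_mul_exp_neg_mul_rpow two_pos hq hb, neg_div, rpow_neg hb.le, inv_rpow hb.le]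
  ring

lemma abs_sin_rpow_div_rpow_le_rpow_sub {α β r : ℝ} (hα : 0 ≤ α) (hr : 0 < r) :
    |sin r| ^ α / r ^ β ≤ r ^ (α - β) := by
  rw [rpow_sub hr]
  gcongr
  exact abs_sin_le_abs.trans_eq (abs_of_pos hr)

lemma abs_sin_rpow_div_rpow_le_rpow_neg {α β r : ℝ} (hα : 0 ≤ α) (hr : 0 < r) :
    |sin r| ^ α / r ^ β ≤ r ^ (-β) := by
  rw [rpow_neg hr.le, ← one_div]
  gcongr
  exact rpow_le_one (abs_nonneg _) (abs_sin_le_one r) hα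

theorem integrableOn_abs_sin_rpow_div_rpow {α β : ℝ} (hβ : 1 < β) (hα : β - 1 < α) :
    IntegrableOn (fun r => |sin r| ^ α / r ^ β) (Ioi 0) := by
  have hmeas : AEStronglyMeasurable (fun r => |sin r| ^ α / r ^ β) :=
    (by fun_prop : Measurable fun r => |sin r| ^ α / r ^ β).aestronglyMeasurable
  have hnorm (r : ℝ) (hr : 0 < r) : ‖|sin r| ^ α / r ^ β‖ = |sin r| ^ α / r ^ β :=
    norm_of_nonneg (by positivity)
  rw [← Ioc_union_Ioi_eq_Ioi zero_le_one]
  refine IntegrableOn.union ?_ ?_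
  · refine (intervalIntegral.intervalIntegrable_rpow' (r := α - β) (by linarith)).1.mono'
      hmeas.restrict (ae_restrict_of_forall_mem measurableSet_Ioc fun r hr => ?_)
    rw [hnorm r hr.1]
    exact abs_sin_rpow_div_rpow_le_rpow_sub (by linarith) hr.1
  · refine (integrableOn_Ioi_rpow_of_lt (a := -β) (by linarith) one_pos).mono' hmeas.restrict
      (ae_restrict_of_forall_mem measurableSet_Ioi fun r hr => ?_)
    rw [hnorm r (one_pos.trans hr)]
    exact abs_sin_rpow_div_rpow_le_rpow_neg (by linarith) (one_pos.trans hr)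

theorem hasSum_integral_Ioc_comp_add_nat_mul {E : Type*} [NormedAddCommGroup E] [NormedSpace ℝ E]
    {f : ℝ → E} {T : ℝ} (hT : 0 < T) (hf : IntegrableOn f (Ioi 0)) :
    HasSum (fun k : ℕ => ∫ s in Ioc 0 T, f (s + k * T)) (∫ r in Ioi 0, f r) := by
  have hmono : Monotone fun k : ℕ => (k : ℝ) * T := fun _ _ hij =>
    mul_le_mul_of_nonneg_right (Nat.cast_le.2 hij) hT.le
  have hunion : ⋃ k : ℕ, Ioc ((k : ℝ) * T) (((k + 1 : ℕ) : ℝ) * T) = Ioi 0 := by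
    have := iUnion_Ioc_map_succ_eq_Ioi (f := fun k : ℕ => (k : ℝ) * T) (fun k => hmono bot_le)
      (not_bddAbove_iff.2 fun x => ?_)
    · simpa using this
    obtain ⟨k, hk⟩ := exists_nat_gt (x / T)
    exact ⟨_, ⟨k, rfl⟩, (div_lt_iff₀ hT).1 hk⟩
  have hdisj : Pairwise (Function.onFun Disjoint
      fun k : ℕ => Ioc ((k : ℝ) * T) (((k + 1 : ℕ) : ℝ) * T)) := by
    simpa only [Order.succ_eq_add_one] using hmono.pairwise_disjoint_on_Ioc_succ
  rw [← hunion] at hf ⊢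
  convert hasSum_integral_iUnion (fun _ => measurableSet_Ioc) hdisj hf using 2 with k
  rw [← intervalIntegral.integral_of_le hT.le, ← intervalIntegral.integral_of_le (hmono k.le_succ),
    intervalIntegral.integral_comp_add_right]
  congr 1 <;> push_cast <;> ring

lemma rpow_mul_one_sub_sq_div_six_rpow_le {α β r : ℝ} (hα : 0 ≤ α) (hr : r ∈ Ioo 0 √6) :
    r ^ (α - β) * (1 - r ^ 2 / 6) ^ α ≤ |sin r| ^ α / r ^ β := by
  have hr6 : r ^ 2 < 6 := (lt_sqrt hr.1.le).1 hr.2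
  have hsin : r * (1 - r ^ 2 / 6) ≤ |sin r| := by
    linarith [sin_ge_sub_cube hr.1.le, le_abs_self (sin r)]
  rw [rpow_sub hr.1, div_mul_eq_mul_div, ← mul_rpow hr.1.le (by linarith)]
  gcongr
  · exact rpow_nonneg hr.1.le β
  · nlinarith [hr.1]

theorem le_integral_abs_sin_rpow_div_rpow {α β : ℝ} (hβ : 1 < β) (hα : β - 1 < α) :
    1 / 2 * 6 ^ ((α - β + 1) / 2) *
        (Gamma ((α - β + 1) / 2) * Gamma (α + 1) / Gamma ((α - β + 1) / 2 + α + 1)) ≤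
      ∫ r in Ioi 0, |sin r| ^ α / r ^ β := by
  have hf := integrableOn_abs_sin_rpow_div_rpow hβ hα
  have hsub : Ioo 0 √6 ⊆ Ioi (0 : ℝ) := fun r hr => hr.1
  calc _ = ∫ r in Ioo 0 √6, r ^ (α - β) * (1 - r ^ 2 / 6) ^ α :=
        (integral_Ioo_rpow_mul_one_sub_sq_div_rpow (by norm_num) (by linarith) (by linarith)).symm
    _ ≤ ∫ r in Ioo 0 √6, |sin r| ^ α / r ^ β :=
        integral_mono_of_nonneg
          (ae_restrict_of_forall_mem measurableSet_Ioo fun r hr =>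
            mul_nonneg (rpow_nonneg hr.1.le _)
              (rpow_nonneg (by nlinarith [(lt_sqrt hr.1.le).1 hr.2]) _))
          (hf.mono_set hsub)
          (ae_restrict_of_forall_mem measurableSet_Ioo fun r hr =>
            rpow_mul_one_sub_sq_div_six_rpow_le (by linarith) hr)
    _ ≤ ∫ r in Ioi 0, |sin r| ^ α / r ^ β :=
        setIntegral_mono_set hf
          (ae_restrict_of_forall_mem measurableSet_Ioi fun r hr =>
            div_nonneg (rpow_nonneg (abs_nonneg _) _) (rpow_nonneg (le_of_lt hr) _))
          hsub.eventuallyLE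

lemma abs_sin_rpow_div_rpow_add_nat_mul_pi_le {α β s : ℝ} (k : ℕ) (hα : 0 ≤ α) (hβ : 0 ≤ β)
    (hs : s ∈ Ioc 0 π) :
    |sin (s + k * π)| ^ α / (s + k * π) ^ β ≤
      ((k : ℝ) + 1) ^ (-β) * (s ^ (α - β) * exp (-(α / 6) * s ^ 2)) := by
  have hsin_nonneg := sin_nonneg_of_nonneg_of_le_pi hs.1.le hs.2
  have hnum : |sin (s + k * π)| ^ α ≤ s ^ α * exp (-(α / 6) * s ^ 2) := by
    rw [sin_add_nat_mul_pi, abs_mul, abs_pow, abs_neg, abs_one, one_pow, one_mul,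
      abs_of_nonneg hsin_nonneg, show -(α / 6) * s ^ 2 = -(s ^ 2 / 6) * α by ring, exp_mul,
      ← mul_rpow hs.1.le (exp_pos _).le]
    exact rpow_le_rpow hsin_nonneg (sin_le_mul_exp_neg_sq_div_six hs.1.le hs.2) hα
  have hden : (((k : ℝ) + 1) * s) ^ β ≤ (s + k * π) ^ β := by
    have hk : (k : ℝ) * s ≤ k * π := mul_le_mul_of_nonneg_left hs.2 k.cast_nonneg
    exact rpow_le_rpow (mul_nonneg (by positivity) hs.1.le) (by linarith) hβ
  calc |sin (s + k * π)| ^ α / (s + k * π) ^ β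
      ≤ s ^ α * exp (-(α / 6) * s ^ 2) / (((k : ℝ) + 1) * s) ^ β :=
        div_le_div₀ (mul_nonneg (rpow_nonneg hs.1.le _) (exp_pos _).le) hnum
          (rpow_pos_of_pos (mul_pos (by positivity) hs.1) β) hden
    _ = ((k : ℝ) + 1) ^ (-β) * (s ^ (α - β) * exp (-(α / 6) * s ^ 2)) := by
        rw [mul_rpow (by positivity) hs.1.le, rpow_neg (by positivity), rpow_sub hs.1]
        ring

theorem integral_abs_sin_rpow_div_rpow_le {α β : ℝ} (hβ : 1 < β) (hα : β - 1 < α) :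
    ∫ r in Ioi 0, |sin r| ^ α / r ^ β ≤
      1 / 2 * (6 / α) ^ ((α - β + 1) / 2) * Gamma ((α - β + 1) / 2) *
        ∑' k : ℕ, ((k : ℝ) + 1) ^ (-β) := by
  have hα0 : 0 < α := by linarith
  set h := fun s : ℝ => s ^ (α - β) * exp (-(α / 6) * s ^ 2)
  have hh : IntegrableOn h (Ioi 0) :=
    integrableOn_rpow_mul_exp_neg_mul_sq (by positivity) (by linarith)
  have hperiod (k : ℕ) : ∫ s in Ioc 0 π, |sin (s + k * π)| ^ α / (s + k * π) ^ β ≤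
      ((k : ℝ) + 1) ^ (-β) * ∫ s in Ioi 0, h s := by
    rw [← integral_const_mul]
    calc _ ≤ ∫ s in Ioc 0 π, ((k : ℝ) + 1) ^ (-β) * h s :=
          integral_mono_of_nonneg
            (ae_restrict_of_forall_mem measurableSet_Ioc fun s hs =>
              div_nonneg (rpow_nonneg (abs_nonneg _) _)
                (rpow_nonneg (add_nonneg hs.1.le (by positivity)) _))
            ((hh.mono_set Ioc_subset_Ioi_self).const_mul _)
            (ae_restrict_of_forall_mem measurableSet_Ioc fun s hs =>
              abs_sin_rpow_div_rpow_add_nat_mul_pi_le k hα0.le (by linarith) hs)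
      _ ≤ ∫ s in Ioi 0, ((k : ℝ) + 1) ^ (-β) * h s :=
          setIntegral_mono_set (hh.const_mul _)
            (ae_restrict_of_forall_mem measurableSet_Ioi fun s hs =>
              mul_nonneg (by positivity) (mul_nonneg (rpow_nonneg (le_of_lt hs) _) (exp_pos _).le))
            Ioc_subset_Ioi_self.eventuallyLE
  have hsummable : Summable fun k : ℕ => ((k : ℝ) + 1) ^ (-β) := by
    simpa using (summable_nat_add_iff 1).mpr (Real.summable_nat_rpow.mpr (by linarith : -β < -1))
  calc ∫ r in Ioi 0, |sin r| ^ α / r ^ β ≤ ∑' k : ℕ, ((k : ℝ) + 1) ^ (-β) * ∫ s in Ioi 0, h s :=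
        hasSum_le hperiod (hasSum_integral_Ioc_comp_add_nat_mul pi_pos
          (integrableOn_abs_sin_rpow_div_rpow hβ hα)) (hsummable.mul_right _).hasSum
    _ = _ := by
        rw [tsum_mul_right, integral_rpow_mul_exp_neg_mul_sq (by positivity) (by linarith), inv_div]
        ring

/-- Two-sided estimate for `∫_0^∞ |sin r|^α r^{-β} dr` when
`α > β - 1 > 0`. -/
theorem sinc_integral_two_sided (α β : ℝ) (hβ : 1 < β) (hα : β - 1 < α) :
    (1 / 2) * 6 ^ ((α - β + 1) / 2) *
        (Real.Gamma ((α - β + 1) / 2) * Real.Gamma (α + 1) /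
          Real.Gamma ((α - β + 1) / 2 + α + 1)) ≤
      (∫ r in Set.Ioi (0 : ℝ), |Real.sin r| ^ α / r ^ β) ∧
    (∫ r in Set.Ioi (0 : ℝ), |Real.sin r| ^ α / r ^ β) ≤
      (1 / 2) * (6 / α) ^ ((α - β + 1) / 2) * Real.Gamma ((α - β + 1) / 2) *
        ∑' k : ℕ, ((k : ℝ) + 1) ^ (-β) :=
  ⟨le_integral_abs_sin_rpow_div_rpow hβ hα, integral_abs_sin_rpow_div_rpow_le hβ hα⟩
end
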